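/- Assume (i) for every M < ∞ and every compact K ⊆ E₀ the set Γ_{M,K} is a compact subset of E, and (ii) for every f ∈ E the map x ↦ I_x(f) is lower semicontinuous on E₀. Then for every compact K ⊆ E₀ and every M < ∞ one has the set identity ⋃_{x∈K}{f ∈ E : I_x(f) ≤ M} = ⋂_{n=1}^∞ Γ_{2M+1/n, K}. -/

import Mathlib

open MeasureTheory Filter Set Topology
open scoped ENNReal

/-! A control of energy `≤ 2M + 1/n` steering `x` to `f` witnesses `I_x(f) ≤ M + 1/(2n)`, and
conversely `I_x(f) ≤ M` is approximated by such controls. Hence `f` lies in every `Γ_{2M+1/n,K}`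
iff `inf_{x ∈ K} I_x(f) ≤ M`; since `x ↦ I_x(f)` is lower semicontinuous, this infimum over the
compact set `K` is attained. -/

theorem IsCompact.exists_le_of_tendsto {X ι β : Type*} [TopologicalSpace X] [LinearOrder β]
    [TopologicalSpace β] [ClosedIciTopology β] {l : Filter ι} [l.NeBot] {K : Set X}
    (hK : IsCompact K) {g : X → β} (hg : LowerSemicontinuousOn g K) {b : ι → β} {c : β}
    (hb : Tendsto b l (𝓝 c)) (h : ∀ᶠ i in l, ∃ x ∈ K, g x ≤ b i) : ∃ a ∈ K, g a ≤ c := by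
  obtain ⟨i, x, hxK, -⟩ := h.exists
  obtain ⟨a, haK, hmin⟩ := hg.exists_isMinOn ⟨x, hxK⟩ hK
  exact ⟨a, haK, ge_of_tendsto hb (h.mono fun i ⟨y, hyK, hy⟩ => (hmin hyK).trans hy)⟩

section ControlProblem

/- `I_x` and `Γ_{M,K}` for an abstract control problem: `adm x f u` says that the control `u`
steers `x` to `f`. -/
variable {α β ι : Type*} (adm : α → β → ι → Prop) (energy : ι → ℝ)

noncomputable def rateFunction (x : α) (f : β) : ℝ≥0∞ :=
  sInf {c | ∃ u, adm x f u ∧ c = ENNReal.ofReal (2⁻¹ * energy u)}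

def reachableSet (M : ℝ) (K : Set α) : Set β :=
  {f | ∃ x ∈ K, ∃ u, adm x f u ∧ energy u ≤ M}

variable {adm energy}

theorem rateFunction_le {x : α} {f : β} {u : ι} (hu : adm x f u) :
    rateFunction adm energy x f ≤ ENNReal.ofReal (2⁻¹ * energy u) :=
  sInf_le ⟨u, hu, rfl⟩

theorem exists_energy_le_of_rateFunction_le {x : α} {f : β} {M δ : ℝ} (hM : 0 ≤ M)
    (hδ : 0 < δ) (h : rateFunction adm energy x f ≤ ENNReal.ofReal M) :
    ∃ u, adm x f u ∧ energy u ≤ 2 * M + δ := by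
  have hlt : rateFunction adm energy x f < ENNReal.ofReal (M + 2⁻¹ * δ) :=
    h.trans_lt ((ENNReal.ofReal_lt_ofReal_iff (by positivity)).mpr (by linarith))
  obtain ⟨_, ⟨u, hu, rfl⟩, hu_lt⟩ := sInf_lt_iff.mp hlt
  have hu_energy := (ENNReal.ofReal_lt_ofReal_iff (by positivity)).mp hu_lt
  exact ⟨u, hu, by linarith⟩

theorem biUnion_rateFunction_le_eq_iInter_reachableSet [TopologicalSpace α] {K : Set α}
    (hK : IsCompact K) (hlsc : ∀ f, LowerSemicontinuousOn (fun x => rateFunction adm energy x f) K)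
    {M : ℝ} (hM : 0 ≤ M) :
    (⋃ x ∈ K, {f | rateFunction adm energy x f ≤ ENNReal.ofReal M}) =
      ⋂ (n : ℕ) (_ : 1 ≤ n), reachableSet adm energy (2 * M + 1 / n) K := by
  ext f
  simp only [mem_iUnion, mem_iInter, mem_ofPred_eq, reachableSet, exists_prop]
  constructor
  · rintro ⟨x, hxK, hx⟩ n hn
    exact ⟨x, hxK, exists_energy_le_of_rateFunction_le hM (by positivity) hx⟩
  · intro hf
    have hb : Tendsto (fun n : ℕ => ENNReal.ofReal (M + 2⁻¹ * (1 / n))) atTop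
        (𝓝 (ENNReal.ofReal M)) := by
      simpa using ENNReal.tendsto_ofReal
        ((tendsto_one_div_atTop_nhds_zero_nat.const_mul 2⁻¹).const_add M)
    refine hK.exists_le_of_tendsto (hlsc f) hb ((eventually_ge_atTop 1).mono fun n hn => ?_)
    obtain ⟨x, hxK, u, hu, hle⟩ := hf n hn
    exact ⟨x, hxK, (rateFunction_le hu).trans (ENNReal.ofReal_le_ofReal (by linarith))⟩

end ControlProblem

theorem stmt_4 {E₀ E H : Type*}
    [TopologicalSpace E₀]
    [NormedAddCommGroup H] [InnerProductSpace ℝ H]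
    (T : ℝ)
    (G : E₀ × C(Icc (0:ℝ) T, H) → E)
    (I : E₀ → E → ℝ≥0∞)
    (hIdef : ∀ x f, I x f = sInf {c : ℝ≥0∞ |
      ∃ u : ℝ → H, MemLp u 2 ((volume : Measure ℝ).restrict (Icc (0:ℝ) T)) ∧
        (∃ φ : C(Icc (0:ℝ) T, H),
          (∀ t : Icc (0:ℝ) T, φ t = ∫ s in Icc (0:ℝ) (t:ℝ), u s) ∧ f = G (x, φ)) ∧
        c = ENNReal.ofReal (2⁻¹ * ∫ s in Icc (0:ℝ) T, ‖u s‖ ^ 2)})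
    (Γ : ℝ → Set E₀ → Set E)
    (hΓdef : ∀ M K, Γ M K = {f : E | ∃ x ∈ K, ∃ u : ℝ → H,
        MemLp u 2 ((volume : Measure ℝ).restrict (Icc (0:ℝ) T)) ∧
        (∫ s in Icc (0:ℝ) T, ‖u s‖ ^ 2) ≤ M ∧
        ∃ φ : C(Icc (0:ℝ) T, H),
          (∀ t : Icc (0:ℝ) T, φ t = ∫ s in Icc (0:ℝ) (t:ℝ), u s) ∧ f = G (x, φ)})
    (hlsc : ∀ f : E, LowerSemicontinuous fun x => I x f) :
    ∀ K : Set E₀, IsCompact K → ∀ M : ℝ, 0 ≤ M →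
      (⋃ x ∈ K, {f : E | I x f ≤ ENNReal.ofReal M}) =
        ⋂ (n : ℕ) (_ : 1 ≤ n), Γ (2 * M + 1 / (n : ℝ)) K := by
  intro K hK M hM
  let adm (x : E₀) (f : E) (u : ℝ → H) : Prop :=
    MemLp u 2 ((volume : Measure ℝ).restrict (Icc (0:ℝ) T)) ∧
      ∃ φ : C(Icc (0:ℝ) T, H), (∀ t : Icc (0:ℝ) T, φ t = ∫ s in Icc (0:ℝ) (t:ℝ), u s) ∧
        f = G (x, φ)
  let energy (u : ℝ → H) : ℝ := ∫ s in Icc (0:ℝ) T, ‖u s‖ ^ 2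
  have hI : I = rateFunction adm energy := by
    funext x f
    simp only [hIdef, rateFunction, adm, energy, and_assoc]
  have hΓ : Γ = reachableSet adm energy := by
    funext M K
    simp only [hΓdef, reachableSet, adm, energy, and_assoc, and_comm (a := _ ≤ M)]
  subst hI hΓ
  exact biUnion_rateFunction_le_eq_iInter_reachableSet hK
    (fun f => (hlsc f).lowerSemicontinuousOn K) hM
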